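/- arXiv:2211.05013 — 5 statements merged into one kernel-verified Lean document; each statement's English description precedes it below -/
import Mathlib

section
/- If the null point location is x₀ = (1/ψ)·artanh((cosh(ψL) − 1)/(sinh(ψL) + k_b/(Eψ))), then the stress field σ(x) = E·αΔT·(cosh(ψ(x−x₀))/cosh(ψ(L−x₀)) − 1) + F·(Eψ·sinh(ψx) + k_b·cosh(ψx))/(A·(Eψ·sinh(ψL) + k_b·cosh(ψL))) and the displacement field u(x) = αΔT·sinh(ψ(x−x₀))/(ψ·cosh(ψ(L−x₀))) + F·(Eψ·cosh(ψx) + k_b·sinh(ψx))/(A·E·ψ·(Eψ·sinh(ψL) + k_b·cosh(ψL))) satisfy the pile-tip boundary condition σ(0) = k_b·u(0). -/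
/-- Real inverse hyperbolic tangent. -/
noncomputable def artanh (y : ℝ) : ℝ := (1 / 2) * Real.log ((1 + y) / (1 - y))

/-!
Put `t = ψL`, `κ = k_b/(Eψ)` and `a = ψx₀`, so that `tanh a = (cosh t - 1)/(sinh t + κ)`.
The load terms in `F` agree on both sides of `σ(0) = k_b u(0)`, and the thermal terms agree
exactly when `cosh a + κ sinh a = cosh (t - a)`; expanding `cosh (t - a)` and dividing by
`cosh a` turns this identity into the defining equation of `tanh a`.
-/

section

open Real Set

theorem artanh_eq_real_artanh {y : ℝ} (hy : y ∈ Icc (-1) 1) : _root_.artanh y = Real.artanh y :=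
  (artanh_eq_half_log hy).symm

theorem tanh_artanh_of_mem_Ioo {y : ℝ} (hy : y ∈ Ioo (-1) 1) : tanh (_root_.artanh y) = y := by
  rw [artanh_eq_real_artanh (Ioo_subset_Icc_self hy), Real.tanh_artanh hy]

theorem cosh_sub_one_div_sinh_add_mem_Ioo {t κ : ℝ} (ht : 0 < t) (hκ : 0 ≤ κ) :
    (cosh t - 1) / (sinh t + κ) ∈ Ioo (-1) 1 := by
  have hden : 0 < sinh t + κ := by linarith [sinh_pos_iff.mpr ht]
  constructor
  · exact lt_of_lt_of_le (by norm_num) (div_nonneg (by linarith [one_le_cosh t]) hden.le)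
  · rw [div_lt_one hden]
    linarith [cosh_sub_sinh t, exp_lt_one_iff.mpr (neg_neg_of_pos ht)]

theorem tanh_artanh_cosh_sub_one_div_sinh_add {t κ : ℝ} (ht : 0 < t) (hκ : 0 ≤ κ) :
    tanh (_root_.artanh ((cosh t - 1) / (sinh t + κ))) * (sinh t + κ) = cosh t - 1 := by
  rw [tanh_artanh_of_mem_Ioo (cosh_sub_one_div_sinh_add_mem_Ioo ht hκ)]
  exact div_mul_cancel₀ _ (by linarith [sinh_pos_iff.mpr ht])

theorem cosh_add_mul_sinh_eq_cosh_sub {a t κ : ℝ} (h : tanh a * (sinh t + κ) = cosh t - 1) :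
    cosh a + κ * sinh a = cosh (t - a) := by
  rw [tanh_eq_sinh_div_cosh, div_mul_eq_mul_div, div_eq_iff (cosh_pos a).ne'] at h
  rw [cosh_sub]
  linear_combination h

end

theorem tip_boundary_condition_general
    (ψ E A L α ΔT F kb : ℝ)
    (hψ : 0 < ψ) (hE : 0 < E) (hL : 0 < L) (hkb : 0 ≤ kb) :
    let x₀ : ℝ := (1 / ψ) *
      artanh ((Real.cosh (ψ * L) - 1) / (Real.sinh (ψ * L) + kb / (E * ψ)))
    let σ : ℝ → ℝ := fun x =>
      E * (α * ΔT) * (Real.cosh (ψ * (x - x₀)) / Real.cosh (ψ * (L - x₀)) - 1) +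
      F * (E * ψ * Real.sinh (ψ * x) + kb * Real.cosh (ψ * x)) /
        (A * (E * ψ * Real.sinh (ψ * L) + kb * Real.cosh (ψ * L)))
    let u : ℝ → ℝ := fun x =>
      α * ΔT * Real.sinh (ψ * (x - x₀)) / (ψ * Real.cosh (ψ * (L - x₀))) +
      F * (E * ψ * Real.cosh (ψ * x) + kb * Real.sinh (ψ * x)) /
        (A * E * ψ * (E * ψ * Real.sinh (ψ * L) + kb * Real.cosh (ψ * L)))
    σ 0 = kb * u 0 := by
  intro x₀ σ u
  have hEψ : 0 < E * ψ := mul_pos hE hψ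
  set κ := kb / (E * ψ)
  have hnull : Real.tanh (ψ * x₀) * (Real.sinh (ψ * L) + κ) = Real.cosh (ψ * L) - 1 := by
    rw [show ψ * x₀ = ψ * (ψ⁻¹ * _) by rw [← one_div], mul_inv_cancel_left₀ hψ.ne']
    exact tanh_artanh_cosh_sub_one_div_sinh_add (mul_pos hψ hL) (div_nonneg hkb hEψ.le)
  have hcosh : E * ψ * Real.cosh (ψ * x₀) + kb * Real.sinh (ψ * x₀) =
      E * ψ * Real.cosh (ψ * (L - x₀)) := by
    rw [mul_sub, ← cosh_add_mul_sinh_eq_cosh_sub hnull]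
    linear_combination Real.sinh (ψ * x₀) * (mul_div_cancel₀ kb hEψ.ne').symm
  have thermal : E * (α * ΔT) * (Real.cosh (ψ * (0 - x₀)) / Real.cosh (ψ * (L - x₀)) - 1) =
      kb * (α * ΔT * Real.sinh (ψ * (0 - x₀)) / (ψ * Real.cosh (ψ * (L - x₀)))) := by
    rw [zero_sub, mul_neg, Real.cosh_neg, Real.sinh_neg]
    field_simp [(Real.cosh_pos (ψ * (L - x₀))).ne']
    linear_combination α * ΔT * hcosh
  have load : ∀ D : ℝ, F * (E * ψ * Real.sinh (ψ * 0) + kb * Real.cosh (ψ * 0)) / (A * D) =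
      kb * (F * (E * ψ * Real.cosh (ψ * 0) + kb * Real.sinh (ψ * 0)) / (A * E * ψ * D)) := by
    intro D
    simp only [mul_zero, Real.sinh_zero, Real.cosh_zero]
    field_simp
    ring
  simp only [σ, u, thermal, load]
  ring

/-- With the null point located by the artanh formula, the stress and displacement
fields satisfy the pile-tip boundary condition `σ(0) = k_b · u(0)`. -/
theorem tip_boundary_condition
    (ψ E A L α ΔT F kb : ℝ)
    (hψ : 0 < ψ) (hE : 0 < E) (hA : 0 < A) (hL : 0 < L) (hkb : 0 ≤ kb) :
    let x₀ : ℝ := (1 / ψ) *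
      artanh ((Real.cosh (ψ * L) - 1) / (Real.sinh (ψ * L) + kb / (E * ψ)))
    let σ : ℝ → ℝ := fun x =>
      E * (α * ΔT) * (Real.cosh (ψ * (x - x₀)) / Real.cosh (ψ * (L - x₀)) - 1) +
      F * (E * ψ * Real.sinh (ψ * x) + kb * Real.cosh (ψ * x)) /
        (A * (E * ψ * Real.sinh (ψ * L) + kb * Real.cosh (ψ * L)))
    let u : ℝ → ℝ := fun x =>
      α * ΔT * Real.sinh (ψ * (x - x₀)) / (ψ * Real.cosh (ψ * (L - x₀))) +
      F * (E * ψ * Real.cosh (ψ * x) + kb * Real.sinh (ψ * x)) /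
        (A * E * ψ * (E * ψ * Real.sinh (ψ * L) + kb * Real.cosh (ψ * L)))
    σ 0 = kb * u 0 :=
  tip_boundary_condition_general ψ E A L α ΔT F kb hψ hE hL hkb
end

section
/- The null point location, viewed as the function k_b ↦ (1/ψ)·artanh((cosh(ψL) − 1)/(sinh(ψL) + k_b/(Eψ))), is strictly decreasing in the tip-spring stiffness k_b on [0, ∞). -/
/-- The null point location is strictly decreasing in the tip-spring stiffness
`k_b` on `[0, ∞)`. -/
theorem null_point_strictly_decreasing_in_kb
    (ψ E L : ℝ) (hψ : 0 < ψ) (hE : 0 < E) (hL : 0 < L) :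
    StrictAntiOn (fun kb : ℝ => (1 / ψ) *
      artanh ((Real.cosh (ψ * L) - 1) / (Real.sinh (ψ * L) + kb / (E * ψ))))
      (Set.Ici 0) := by
  intro a ha b hb hab
  simp only [Set.mem_Ici] at ha hb
  set x := ψ * L with hxdef
  have hx : 0 < x := mul_pos hψ hL
  have hc : 0 < Real.cosh x - 1 := sub_pos.2 (Real.one_lt_cosh.2 hx.ne')
  have hs : 0 < Real.sinh x := Real.sinh_pos_iff.2 hx
  have hcs : Real.cosh x - 1 < Real.sinh x := by
    have h1 : Real.cosh x - Real.sinh x = Real.exp (-x) := Real.cosh_sub_sinh x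
    have h2 : Real.exp (-x) < 1 := Real.exp_lt_one_iff.2 (by linarith)
    linarith
  have hEψ : 0 < E * ψ := mul_pos hE hψ
  set c := Real.cosh x - 1
  set s := Real.sinh x
  set da := s + a / (E * ψ) with hda
  set db := s + b / (E * ψ) with hdb
  have hda0 : 0 < da := by positivity
  have hdb0 : 0 < db := by positivity
  have hdd : da < db := by
    rw [hda, hdb]
    have : a / (E * ψ) < b / (E * ψ) := div_lt_div_of_pos_right hab hEψ
    linarith
  set ya := c / da with hya
  set yb := c / db with hyb
  have hyb_lt_ya : yb < ya := div_lt_div_of_pos_left hc hda0 hdd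
  have hyb0 : 0 < yb := div_pos hc hdb0
  have hya1 : ya < 1 := by
    rw [hya, div_lt_one hda0, hda]
    exact lt_add_of_lt_of_nonneg hcs (by positivity)
  -- now show artanh yb < artanh ya
  have key : artanh yb < artanh ya := by
    unfold artanh
    have h1 : (1 + yb) / (1 - yb) < (1 + ya) / (1 - ya) := by
      rw [div_lt_div_iff₀ (by linarith) (by linarith)]
      nlinarith
    have h2 : 0 < (1 + yb) / (1 - yb) := by
      apply div_pos <;> linarith
    have := Real.log_lt_log h2 h1
    linarith
  have hψ' : 0 < 1 / ψ := by positivity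
  simp only
  exact (mul_lt_mul_iff_right₀ hψ').2 key
end

section
/- Under pure thermal heating (F = 0, α > 0, ΔT > 0), with the null point x₀ = (1/ψ)·artanh((cosh(ψL) − 1)/(sinh(ψL) + k_b/(Eψ))), the thermal axial stress σ(x) = E·αΔT·(cosh(ψ(x−x₀))/cosh(ψ(L−x₀)) − 1) satisfies σ(x) ≤ 0 for every x in the interval [0, L]; that is, heating induces compressive stress throughout the pile. -/
lemma artanh_nonneg {y : ℝ} (h0 : 0 ≤ y) (h1 : y < 1) : 0 ≤ artanh y := by
  unfold artanh
  have : (1:ℝ) ≤ (1 + y) / (1 - y) := by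
    rw [le_div_iff₀ (by linarith)]; linarith
  have := Real.log_nonneg this
  linarith

lemma artanh_le {y v : ℝ} (h0 : 0 ≤ y) (hv : 0 ≤ v) (hy : y ≤ Real.tanh v) :
    artanh y ≤ v := by
  have hc : 0 < Real.cosh v := Real.cosh_pos v
  have hs : Real.sinh v < Real.cosh v := Real.sinh_lt_cosh v
  have htl : Real.tanh v < 1 := by
    rw [Real.tanh_eq_sinh_div_cosh, div_lt_one hc]; exact hs
  have hy1 : y < 1 := lt_of_le_of_lt hy htl
  have key : (1 + y) / (1 - y) ≤ Real.exp (2 * v) := by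
    have heq : (1 + Real.tanh v) / (1 - Real.tanh v) = Real.exp (2 * v) := by
      rw [Real.tanh_eq_sinh_div_cosh,
        show (2:ℝ) * v = v - (-v) by ring, Real.exp_sub,
        ← Real.cosh_add_sinh, ← Real.cosh_sub_sinh]
      have hne : Real.cosh v - Real.sinh v ≠ 0 := by linarith
      field_simp
    calc (1 + y) / (1 - y) ≤ (1 + Real.tanh v) / (1 - Real.tanh v) := by
          rw [div_le_div_iff₀ (by linarith) (by linarith)]
          nlinarith
      _ = Real.exp (2 * v) := heq
  have hpos : 0 < (1 + y) / (1 - y) := div_pos (by linarith) (by linarith)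
  have := (Real.log_le_iff_le_exp hpos).2 key
  unfold artanh
  linarith

/-- Under pure thermal heating, with the null point given by the artanh formula,
the thermal axial stress is nonpositive (compressive) throughout the pile `[0, L]`. -/
theorem heating_induces_compressive_stress
    (ψ E L α ΔT kb : ℝ)
    (hψ : 0 < ψ) (hE : 0 < E) (hL : 0 < L) (hα : 0 < α) (hΔT : 0 < ΔT)
    (hkb : 0 ≤ kb) :
    let x₀ : ℝ := (1 / ψ) *
      artanh ((Real.cosh (ψ * L) - 1) / (Real.sinh (ψ * L) + kb / (E * ψ)))
    let σ : ℝ → ℝ := fun x =>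
      E * (α * ΔT) * (Real.cosh (ψ * (x - x₀)) / Real.cosh (ψ * (L - x₀)) - 1)
    ∀ x ∈ Set.Icc (0 : ℝ) L, σ x ≤ 0 := by
  intro x₀ σ x hx
  obtain ⟨hx0, hxL⟩ := hx
  set u : ℝ := ψ * L with hu
  have hupos : 0 < u := mul_pos hψ hL
  set v : ℝ := u / 2 with hv
  have hvpos : 0 < v := by positivity
  set c : ℝ := kb / (E * ψ) with hc
  have hcnn : 0 ≤ c := by positivity
  have hsinhpos : 0 < Real.sinh u := Real.sinh_pos_iff.2 hupos
  set t : ℝ := (Real.cosh u - 1) / (Real.sinh u + c) with ht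
  have hNnn : 0 ≤ Real.cosh u - 1 := by linarith [Real.one_le_cosh u]
  have htnn : 0 ≤ t := by positivity
  -- t ≤ tanh v
  have htanh : t ≤ Real.tanh v := by
    have hcv : 0 < Real.cosh v := Real.cosh_pos v
    have h2v : u = 2 * v := by rw [hv]; ring
    have hco : Real.cosh u = 2 * Real.cosh v ^ 2 - 1 := by
      rw [h2v, Real.cosh_two_mul, Real.sinh_sq v]; ring
    have hsi : Real.sinh u = 2 * Real.sinh v * Real.cosh v := by
      rw [h2v, Real.sinh_two_mul]
    have hkey : Real.tanh v * Real.sinh u = Real.cosh u - 1 := by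
      rw [Real.tanh_eq_sinh_div_cosh, hco, hsi]
      have hsq := Real.sinh_sq v
      field_simp
      nlinarith [Real.sinh_sq v, hcv]
    have h1 : t ≤ (Real.cosh u - 1) / Real.sinh u :=
      div_le_div_of_nonneg_left hNnn hsinhpos (by linarith)
    have h2 : (Real.cosh u - 1) / Real.sinh u = Real.tanh v := by
      rw [← hkey]; field_simp
    linarith [h1, h2 ▸ h1]
  have htl1 : t < 1 := by
    have : Real.tanh v < 1 := by
      rw [Real.tanh_eq_sinh_div_cosh, div_lt_one (Real.cosh_pos v)]
      exact Real.sinh_lt_cosh v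
    linarith
  -- bounds on x₀
  have hart0 : 0 ≤ artanh t := artanh_nonneg htnn htl1
  have hartv : artanh t ≤ v := artanh_le htnn hvpos.le htanh
  have hx₀ : x₀ = (1 / ψ) * artanh t := rfl
  have hx₀0 : 0 ≤ x₀ := by rw [hx₀]; positivity
  have hx₀2 : x₀ ≤ L / 2 := by
    rw [hx₀]
    rw [div_mul_eq_mul_div, one_mul, div_le_div_iff₀ hψ (by norm_num : (0:ℝ) < 2)]
    have : v = ψ * L / 2 := by rw [hv, hu]
    nlinarith
  have hLx₀ : 0 ≤ L - x₀ := by linarith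
  -- |x - x₀| ≤ L - x₀
  have habs : |x - x₀| ≤ L - x₀ := by
    rw [abs_le]; constructor <;> linarith
  have hcosh : Real.cosh (ψ * (x - x₀)) ≤ Real.cosh (ψ * (L - x₀)) := by
    rw [Real.cosh_le_cosh, abs_mul, abs_mul, abs_of_pos hψ,
      abs_of_nonneg hLx₀]
    exact mul_le_mul_of_nonneg_left habs hψ.le
  have hcpos : 0 < Real.cosh (ψ * (L - x₀)) := Real.cosh_pos _
  have hratio : Real.cosh (ψ * (x - x₀)) / Real.cosh (ψ * (L - x₀)) ≤ 1 :=
    (div_le_one hcpos).2 hcosh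
  have : Real.cosh (ψ * (x - x₀)) / Real.cosh (ψ * (L - x₀)) - 1 ≤ 0 := by
    linarith
  exact mul_nonpos_of_nonneg_of_nonpos (by positivity) this
end

section
/- For each fixed x, as the tip-spring stiffness k_b tends to +∞ the semi-floating displacement u(x; k_b) = αΔT·sinh(ψ(x−x₀(k_b)))/(ψ·cosh(ψ(L−x₀(k_b)))) + F·(Eψ·cosh(ψx) + k_b·sinh(ψx))/(A·E·ψ·(Eψ·sinh(ψL) + k_b·cosh(ψL))), where x₀(k_b) = (1/ψ)·artanh((cosh(ψL) − 1)/(sinh(ψL) + k_b/(Eψ))), converges to the end-bearing displacement αΔT·sinh(ψx)/(ψ·cosh(ψL)) + F·sinh(ψx)/(A·E·ψ·cosh(ψL)). -/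
/-- For each fixed `x`, as the tip-spring stiffness `k_b → +∞`, the semi-floating
displacement converges to the end-bearing displacement. -/
theorem semi_floating_tendsto_end_bearing
    (ψ E A L α ΔT F : ℝ)
    (hψ : 0 < ψ) (hE : 0 < E) (hA : 0 < A) (hL : 0 < L) (x : ℝ) :
    let x₀ : ℝ → ℝ := fun kb => (1 / ψ) *
      artanh ((Real.cosh (ψ * L) - 1) / (Real.sinh (ψ * L) + kb / (E * ψ)))
    let u : ℝ → ℝ := fun kb =>
      α * ΔT * Real.sinh (ψ * (x - x₀ kb)) / (ψ * Real.cosh (ψ * (L - x₀ kb))) +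
      F * (E * ψ * Real.cosh (ψ * x) + kb * Real.sinh (ψ * x)) /
        (A * E * ψ * (E * ψ * Real.sinh (ψ * L) + kb * Real.cosh (ψ * L)))
    Filter.Tendsto u Filter.atTop
      (nhds (α * ΔT * Real.sinh (ψ * x) / (ψ * Real.cosh (ψ * L)) +
        F * Real.sinh (ψ * x) / (A * E * ψ * Real.cosh (ψ * L)))) := by
  intro x₀ u
  have hEψ : 0 < E * ψ := mul_pos hE hψ
  have hcosh : (0:ℝ) < Real.cosh (ψ * L) := Real.cosh_pos _
  -- argument of artanh tends to 0
  have harg : Filter.Tendsto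
      (fun kb : ℝ => (Real.cosh (ψ * L) - 1) / (Real.sinh (ψ * L) + kb / (E * ψ)))
      Filter.atTop (nhds 0) := by
    apply Filter.Tendsto.div_atTop tendsto_const_nhds
    apply Filter.tendsto_atTop_add_const_left
    exact Filter.Tendsto.atTop_div_const hEψ Filter.tendsto_id
  have hartanh : ContinuousAt artanh 0 := by
    unfold artanh
    apply ContinuousAt.mul continuousAt_const
    apply ContinuousAt.comp (Real.continuousAt_log (by norm_num))
    exact ContinuousAt.div (by fun_prop) (by fun_prop) (by norm_num)
  have hartanh0 : artanh 0 = 0 := by simp [artanh]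
  have hx0 : Filter.Tendsto x₀ Filter.atTop (nhds 0) := by
    have := (hartanh.tendsto.comp harg).const_mul (1 / ψ)
    rw [hartanh0, mul_zero] at this
    exact this
  -- first term
  have h1 : Filter.Tendsto
      (fun kb => α * ΔT * Real.sinh (ψ * (x - x₀ kb)) / (ψ * Real.cosh (ψ * (L - x₀ kb))))
      Filter.atTop (nhds (α * ΔT * Real.sinh (ψ * x) / (ψ * Real.cosh (ψ * L)))) := by
    have hnum : Filter.Tendsto (fun kb => α * ΔT * Real.sinh (ψ * (x - x₀ kb)))
        Filter.atTop (nhds (α * ΔT * Real.sinh (ψ * x))) := by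
      have : Filter.Tendsto (fun kb => ψ * (x - x₀ kb)) Filter.atTop (nhds (ψ * x)) := by
        have h : Filter.Tendsto (fun kb => x - x₀ kb) Filter.atTop (nhds (x - 0)) :=
          tendsto_const_nhds.sub hx0
        rw [sub_zero] at h
        exact h.const_mul ψ
      exact (Real.continuous_sinh.continuousAt.tendsto.comp this).const_mul _
    have hden : Filter.Tendsto (fun kb => ψ * Real.cosh (ψ * (L - x₀ kb)))
        Filter.atTop (nhds (ψ * Real.cosh (ψ * L))) := by
      have : Filter.Tendsto (fun kb => ψ * (L - x₀ kb)) Filter.atTop (nhds (ψ * L)) := by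
        have h : Filter.Tendsto (fun kb => L - x₀ kb) Filter.atTop (nhds (L - 0)) :=
          tendsto_const_nhds.sub hx0
        rw [sub_zero] at h
        exact h.const_mul ψ
      exact (Real.continuous_cosh.continuousAt.tendsto.comp this).const_mul _
    exact hnum.div hden (by positivity)
  -- second term
  have h2 : Filter.Tendsto
      (fun kb => F * (E * ψ * Real.cosh (ψ * x) + kb * Real.sinh (ψ * x)) /
        (A * E * ψ * (E * ψ * Real.sinh (ψ * L) + kb * Real.cosh (ψ * L))))
      Filter.atTop (nhds (F * Real.sinh (ψ * x) / (A * E * ψ * Real.cosh (ψ * L)))) := by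
    have hinv : Filter.Tendsto (fun kb : ℝ => E * ψ * Real.sinh (ψ * L) / kb)
        Filter.atTop (nhds 0) :=
      Filter.Tendsto.div_atTop tendsto_const_nhds Filter.tendsto_id
    have hinv2 : Filter.Tendsto (fun kb : ℝ => E * ψ * Real.cosh (ψ * x) / kb)
        Filter.atTop (nhds 0) :=
      Filter.Tendsto.div_atTop tendsto_const_nhds Filter.tendsto_id
    have hlim : Filter.Tendsto
        (fun kb : ℝ => F * (E * ψ * Real.cosh (ψ * x) / kb + Real.sinh (ψ * x)) /
          (A * E * ψ * (E * ψ * Real.sinh (ψ * L) / kb + Real.cosh (ψ * L))))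
        Filter.atTop (nhds (F * Real.sinh (ψ * x) / (A * E * ψ * Real.cosh (ψ * L)))) := by
      have hnum : Filter.Tendsto
          (fun kb : ℝ => F * (E * ψ * Real.cosh (ψ * x) / kb + Real.sinh (ψ * x)))
          Filter.atTop (nhds (F * (0 + Real.sinh (ψ * x)))) :=
        (hinv2.add tendsto_const_nhds).const_mul F
      have hden : Filter.Tendsto
          (fun kb : ℝ => A * E * ψ * (E * ψ * Real.sinh (ψ * L) / kb + Real.cosh (ψ * L)))
          Filter.atTop (nhds (A * E * ψ * (0 + Real.cosh (ψ * L)))) :=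
        (hinv.add tendsto_const_nhds).const_mul (A * E * ψ)
      rw [zero_add] at hnum hden
      exact hnum.div hden (by positivity)
    apply hlim.congr'
    filter_upwards [Filter.eventually_gt_atTop (0:ℝ)] with kb hkb
    have hkb' : kb ≠ 0 := ne_of_gt hkb
    have hdpos : 0 < E * ψ * Real.sinh (ψ * L) + kb * Real.cosh (ψ * L) := by
      have : 0 < Real.sinh (ψ * L) := Real.sinh_pos_iff.mpr (by positivity)
      positivity
    field_simp
  have := h1.add h2
  exact this
end

section
/- Under pure thermal heating (F = 0, α > 0, ΔT > 0), with the null point x₀ = (1/ψ)·artanh((cosh(ψL) − 1)/(sinh(ψL) + k_b/(Eψ))), the thermal axial strain ε(x) = αΔT·cosh(ψ(x−x₀))/cosh(ψ(L−x₀)) satisfies 0 < ε(x) ≤ αΔT for every x in [0, L], with ε(L) = αΔT; that is, the observed thermal strain is everywhere positive and bounded by the free thermal expansion strain, which is attained at the pile head. -/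
/-- Under pure thermal heating, with the null point given by the artanh formula,
the thermal axial strain is everywhere positive on `[0, L]` and bounded above by
the free thermal expansion strain `αΔT`, which is attained at the pile head. -/
theorem thermal_strain_positive_and_bounded
    (ψ E L α ΔT kb : ℝ)
    (hψ : 0 < ψ) (hE : 0 < E) (hL : 0 < L) (hα : 0 < α) (hΔT : 0 < ΔT)
    (hkb : 0 ≤ kb) :
    let x₀ : ℝ := (1 / ψ) *
      artanh ((Real.cosh (ψ * L) - 1) / (Real.sinh (ψ * L) + kb / (E * ψ)))
    let ε : ℝ → ℝ := fun x =>
      α * ΔT * Real.cosh (ψ * (x - x₀)) / Real.cosh (ψ * (L - x₀))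
    (∀ x ∈ Set.Icc (0 : ℝ) L, 0 < ε x ∧ ε x ≤ α * ΔT) ∧ ε L = α * ΔT := by
  intro x₀ ε
  set a : ℝ := ψ * L with ha_def
  have ha : 0 < a := mul_pos hψ hL
  set c : ℝ := kb / (E * ψ) with hc_def
  have hc : 0 ≤ c := div_nonneg hkb (le_of_lt (mul_pos hE hψ))
  have hsinh : 0 < Real.sinh a := Real.sinh_pos_iff.2 ha
  have hcosh1 : 1 ≤ Real.cosh a := Real.one_le_cosh a
  set s : ℝ := Real.sinh a + c with hs_def
  have hs : 0 < s := by positivity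
  have hexp : Real.exp a * Real.exp (-a) = 1 := by
    rw [← Real.exp_add]; simp
  have hexp1 : 1 ≤ Real.exp a := Real.one_le_exp ha.le
  have hexpneg : Real.exp (-a) < 1 := Real.exp_lt_one_iff.2 (by linarith)
  have hcs : Real.cosh a - Real.sinh a = Real.exp (-a) := Real.cosh_sub_sinh a
  have hcs' : Real.cosh a + Real.sinh a = Real.exp a := Real.cosh_add_sinh a
  set y : ℝ := (Real.cosh a - 1) / s with hy_def
  have hy0 : 0 ≤ y := div_nonneg (by linarith) hs.le
  have hylt : y < 1 := by
    rw [hy_def, div_lt_one hs]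
    linarith
  have hr1 : (1 : ℝ) ≤ (1 + y) / (1 - y) := by
    rw [le_div_iff₀ (by linarith)]; linarith
  have hrpos : 0 < (1 + y) / (1 - y) := by positivity
  have hx₀eq : x₀ = (1 / ψ) * ((1 / 2) * Real.log ((1 + y) / (1 - y))) := rfl
  have hlog0 : 0 ≤ Real.log ((1 + y) / (1 - y)) := Real.log_nonneg hr1
  have hx₀0 : 0 ≤ x₀ := by rw [hx₀eq]; positivity
  have hrle : (1 + y) / (1 - y) ≤ Real.exp a := by
    rw [div_le_iff₀ (by linarith)]
    have hy : y * s = Real.cosh a - 1 := by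
      rw [hy_def, div_mul_cancel₀ _ hs.ne']
    nlinarith [mul_nonneg hc (sub_nonneg.2 hexp1)]
  have hloga : Real.log ((1 + y) / (1 - y)) ≤ a :=
    (Real.log_le_iff_le_exp hrpos).2 hrle
  have hx₀L : x₀ ≤ L / 2 := by
    have h1 : x₀ ≤ (1 / ψ) * ((1 / 2) * a) := by
      rw [hx₀eq]
      apply mul_le_mul_of_nonneg_left _ (by positivity)
      linarith
    have h2 : (1 / ψ) * ((1 / 2) * a) = L / 2 := by
      rw [ha_def]; field_simp
    linarith
  clear_value x₀
  clear hx₀eq hloga hrle hlog0 hr1 hrpos hy0 hylt hy_def hcs hcs' hexpneg hexp1 hexp hs hs_def hsinh hcosh1 hc hc_def ha ha_def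
  have hcpos : ∀ t : ℝ, 0 < Real.cosh t := Real.cosh_pos
  constructor
  · intro x hx
    obtain ⟨hx0, hxL⟩ := hx
    constructor
    · show 0 < α * ΔT * Real.cosh (ψ * (x - x₀)) / Real.cosh (ψ * (L - x₀))
      positivity
    · show α * ΔT * Real.cosh (ψ * (x - x₀)) / Real.cosh (ψ * (L - x₀)) ≤ α * ΔT
      rw [div_le_iff₀ (hcpos _)]
      have hmono : Real.cosh (ψ * (x - x₀)) ≤ Real.cosh (ψ * (L - x₀)) := by
        rw [Real.cosh_le_cosh]
        rw [abs_of_nonneg (by nlinarith : (0:ℝ) ≤ ψ * (L - x₀))]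
        rw [abs_mul, abs_of_pos hψ]
        have habs : |x - x₀| ≤ L - x₀ := by
          rw [abs_le]; constructor <;> nlinarith
        nlinarith
      nlinarith [mul_pos hα hΔT, hcpos (ψ * (x - x₀)), hcpos (ψ * (L - x₀))]
  · show α * ΔT * Real.cosh (ψ * (L - x₀)) / Real.cosh (ψ * (L - x₀)) = α * ΔT
    rw [mul_div_assoc, div_self (hcpos _).ne', mul_one]
end
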